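/- arXiv:2605.30319 — 2 statements merged into one kernel-verified Lean document; each statement's English description precedes it below -/
import Mathlib

section
/- Row-wise tail error of low-rank approximation: let A ∈ ℝ^{n×m} have rank at most r with singular value decomposition A = Σ_{i=1}^r σ_i u_i v_iᵀ, σ_1 ≥ … ≥ σ_r, and let 0 ≤ s < r. Then ‖A_s − A‖_{2,∞} ≤ ( max_{s < i ≤ r} ‖u_i‖_∞ ) · √( Σ_{i=s+1}^r σ_i² ) ≤ √r · σ_{s+1} · max_{s < i ≤ r} ‖u_i‖_∞. -/
open MeasureTheory ProbabilityTheory Matrix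
open scoped BigOperators ENNReal

noncomputable section

namespace CausalPanel

/-- ℓ₂→ℓ₂ operator (spectral) norm of a real matrix. -/
def opNorm {α β : Type*} [Fintype α] [Fintype β] [DecidableEq β] (A : Matrix α β ℝ) : ℝ :=
  ‖LinearMap.toContinuousLinearMap (Matrix.toEuclideanLin A)‖

/-- Frobenius norm. -/
def frobNorm {α β : Type*} [Fintype α] [Fintype β] (A : Matrix α β ℝ) : ℝ :=
  Real.sqrt (∑ i, ∑ j, (A i j) ^ 2)

/-- Row-wise ℓ₂ norm `‖·‖_{2,∞}`. -/
def norm2Inf {α β : Type*} [Fintype α] [Fintype β] (A : Matrix α β ℝ) : ℝ :=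
  ⨆ i, Real.sqrt (∑ j, (A i j) ^ 2)

/-- Entrywise sup norm `‖·‖_∞`. -/
def entrySup {α β : Type*} [Fintype α] [Fintype β] (A : Matrix α β ℝ) : ℝ :=
  ⨆ i, ⨆ j, |A i j|

/-- Vector sup norm. -/
def vecSup {α : Type*} [Fintype α] (v : α → ℝ) : ℝ := ⨆ i, |v i|

/-- `sval A k` is the `k`-th largest singular value of `A` (1-indexed), via Courant–Fischer. -/
def sval {α β : Type*} [Fintype α] [Fintype β] [DecidableEq β] (A : Matrix α β ℝ) (k : ℕ) : ℝ :=
  sSup {t : ℝ | 0 ≤ t ∧ ∃ V : Submodule ℝ (EuclideanSpace ℝ β),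
    Module.finrank ℝ V = k ∧ ∀ x ∈ V, t * ‖x‖ ≤ ‖Matrix.toEuclideanLin A x‖}

/-- `s`-th singular value gap `δ_s = σ_s - σ_{s+1}`. -/
def svalGap {α β : Type*} [Fintype α] [Fintype β] [DecidableEq β] (A : Matrix α β ℝ) (s : ℕ) : ℝ :=
  sval A s - sval A (s + 1)

/-- Best rank-`s` approximation (a Frobenius-norm minimizer among matrices of rank ≤ `s`);
when `σ_s > σ_{s+1}` this is the truncated SVD. -/
def truncate {α β : Type*} [Fintype α] [Fintype β] [DecidableEq β] (A : Matrix α β ℝ) (s : ℕ) :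
    Matrix α β ℝ :=
  Classical.epsilon fun B : Matrix α β ℝ =>
    B.rank ≤ s ∧ ∀ C : Matrix α β ℝ, C.rank ≤ s → frobNorm (A - B) ≤ frobNorm (A - C)

/-- `(K, σ)`-bounded random matrix (entrywise moment conditions). -/
def KSigmaBounded {Ω : Type*} [MeasurableSpace Ω] (μm : Measure Ω) {α β : Type*}
    (E : Ω → α → β → ℝ) (K σ : ℝ) : Prop :=
  ∀ i j, (∫ ω, E ω i j ∂μm) = 0 ∧ (∫ ω, |E ω i j| ^ 2 ∂μm) ≤ σ ^ 2 ∧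
    ∀ ℓ : ℕ, 2 ≤ ℓ → (∫ ω, |E ω i j| ^ ℓ ∂μm) ≤ K ^ (ℓ - 2) * σ ^ 2

/-- Orthonormal family of vectors. -/
def OrthonormalFamily {ι α : Type*} [DecidableEq ι] [Fintype α] (u : ι → α → ℝ) : Prop :=
  ∀ i j, (∑ k, u i k * u j k) = if i = j then 1 else 0

/-- The symmetric dilation `[[0, A], [Aᵀ, 0]]`. -/
def dilation {α β : Type*} (A : Matrix α β ℝ) : Matrix (α ⊕ β) (α ⊕ β) ℝ :=
  Matrix.fromBlocks 0 A Aᵀ 0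

/-- Complexified symmetric dilation. -/
def cdilation {α β : Type*} (A : Matrix α β ℝ) : Matrix (α ⊕ β) (α ⊕ β) ℂ :=
  (dilation A).map fun x => (x : ℂ)

/-- Eigenvector `𝐮_{+i}` of the symmetric dilation. -/
def uplusVec {n m r : ℕ} (u : Fin r → Fin n → ℝ) (v : Fin r → Fin m → ℝ) (i : Fin r) :
    (Fin n ⊕ Fin m) → ℝ :=
  fun x => (Real.sqrt 2)⁻¹ * Sum.elim (u i) (v i) x

/-- Eigenvector `𝐮_{-i}` of the symmetric dilation. -/
def uminusVec {n m r : ℕ} (u : Fin r → Fin n → ℝ) (v : Fin r → Fin m → ℝ) (i : Fin r) :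
    (Fin n ⊕ Fin m) → ℝ :=
  fun x => (Real.sqrt 2)⁻¹ * Sum.elim (u i) (fun j => -(v i j)) x

/-- ℓ₂ norm of a complex vector. -/
def cvecNorm {α : Type*} [Fintype α] (w : α → ℂ) : ℝ :=
  Real.sqrt (∑ j, ‖w j‖ ^ 2)

/-- Arc-length integral of `f` along the segment from `w₁` to `w₂`. -/
def segInt (w₁ w₂ : ℂ) (f : ℂ → ℝ) : ℝ :=
  ‖w₂ - w₁‖ * ∫ t in (0:ℝ)..(1:ℝ), f (w₁ + (t : ℂ) * (w₂ - w₁))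

/-- Arc-length integral of `f` along the boundary of the rectangle `[x₁, x₂] × [-T, T] ⊆ ℂ`. -/
def rectInt (x₁ x₂ T : ℝ) (f : ℂ → ℝ) : ℝ :=
  segInt ((x₁ : ℂ) - T * Complex.I) ((x₂ : ℂ) - T * Complex.I) f +
  segInt ((x₂ : ℂ) - T * Complex.I) ((x₂ : ℂ) + T * Complex.I) f +
  segInt ((x₂ : ℂ) + T * Complex.I) ((x₁ : ℂ) + T * Complex.I) f +
  segInt ((x₁ : ℂ) + T * Complex.I) ((x₁ : ℂ) - T * Complex.I) f

/-- Arc-length integral along the contour `Γ = Γ⁺ ∪ Γ⁻`. -/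
def contourInt (σs δs σ1 : ℝ) (f : ℂ → ℝ) : ℝ :=
  rectInt (σs - δs / 2) (2 * σ1) (2 * σ1) f + rectInt (-(2 * σ1)) (-σs + δs / 2) (2 * σ1) f

/-- The matrix `P(z)` appearing in the contour expansion. -/
def Pres {n m r : ℕ} (σv : Fin r → ℝ) (u : Fin r → Fin n → ℝ) (v : Fin r → Fin m → ℝ) (z : ℂ) :
    Matrix (Fin n ⊕ Fin m) (Fin n ⊕ Fin m) ℂ :=
  (∑ i, ((σv i : ℂ) / ((z - σv i) * z)) •
      Matrix.vecMulVec (fun x => (uplusVec u v i x : ℂ)) (fun x => (uplusVec u v i x : ℂ))) -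
  (∑ i, ((σv i : ℂ) / ((z + σv i) * z)) •
      Matrix.vecMulVec (fun x => (uminusVec u v i x : ℂ)) (fun x => (uminusVec u v i x : ℂ)))

end CausalPanel

/-!
Row `j` of `A - Aₛ` is `∑_{i > s} σᵢ uᵢ(j) vᵢᵀ`; since the `vᵢ` are orthonormal its squared norm
is `∑_{i > s} σᵢ² uᵢ(j)² ≤ (max_{i > s} ‖uᵢ‖_∞)² ∑_{i > s} σᵢ²`. The second bound only uses that the
at most `r` tail singular values are at most `σ_{s+1}`.
-/

namespace CausalPanel

theorem abs_le_vecSup {α : Type*} [Fintype α] (v : α → ℝ) (j : α) : |v j| ≤ vecSup v :=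
  le_ciSup (f := fun k => |v k|) (Set.finite_range _).bddAbove j

theorem vecSup_nonneg {α : Type*} [Fintype α] (v : α → ℝ) : 0 ≤ vecSup v :=
  Real.iSup_nonneg fun _ => abs_nonneg _

theorem norm2Inf_neg {α β : Type*} [Fintype α] [Fintype β] (B : Matrix α β ℝ) :
    norm2Inf (-B) = norm2Inf B := by
  simp only [norm2Inf, Matrix.neg_apply, neg_sq]

theorem norm2Inf_le_of_sum_sq_le {α β : Type*} [Fintype α] [Fintype β] {B : Matrix α β ℝ}
    {C : ℝ} (hC : 0 ≤ C) (h : ∀ i, ∑ j, B i j ^ 2 ≤ C ^ 2) : norm2Inf B ≤ C :=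
  Real.iSup_le (fun i => (Real.sqrt_le_left hC).2 (h i)) hC

theorem OrthonormalFamily.sum_sq_sum_mul {ι α : Type*} [DecidableEq ι] [Fintype α]
    {v : ι → α → ℝ} (hv : OrthonormalFamily v) (T : Finset ι) (a : ι → ℝ) :
    ∑ k, (∑ i ∈ T, a i * v i k) ^ 2 = ∑ i ∈ T, a i ^ 2 := by
  have hv' : ∀ i i', ∑ k, v i k * v i' k = if i = i' then 1 else 0 := hv
  calc ∑ k, (∑ i ∈ T, a i * v i k) ^ 2
      = ∑ k, ∑ i ∈ T, ∑ i' ∈ T, a i * a i' * (v i k * v i' k) := by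
        refine Finset.sum_congr rfl fun k _ => ?_
        rw [sq, Finset.sum_mul_sum]
        exact Finset.sum_congr rfl fun i _ => Finset.sum_congr rfl fun i' _ => by ring
    _ = ∑ i ∈ T, ∑ i' ∈ T, a i * a i' * ∑ k, v i k * v i' k := by
        rw [Finset.sum_comm]
        refine Finset.sum_congr rfl fun i _ => ?_
        rw [Finset.sum_comm]
        simp only [Finset.mul_sum]
    _ = ∑ i ∈ T, a i ^ 2 := by
        refine Finset.sum_congr rfl fun i hi => ?_
        simp only [hv', mul_ite, mul_one, mul_zero, Finset.sum_ite_eq, hi, if_true, sq]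

theorem norm2Inf_sum_smul_vecMulVec_le {ι α β : Type*} [DecidableEq ι] [Fintype α] [Fintype β]
    {u : ι → α → ℝ} {v : ι → β → ℝ} (hv : OrthonormalFamily v) (T : Finset ι) (σ : ι → ℝ)
    {M : ℝ} (hM : 0 ≤ M) (hu : ∀ i ∈ T, ∀ j, |u i j| ≤ M) :
    norm2Inf (∑ i ∈ T, σ i • vecMulVec (u i) (v i)) ≤ M * √(∑ i ∈ T, σ i ^ 2) := by
  refine norm2Inf_le_of_sum_sq_le (by positivity) fun j => ?_
  have hrow : ∀ k, (∑ i ∈ T, σ i • vecMulVec (u i) (v i)) j k = ∑ i ∈ T, σ i * u i j * v i k :=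
    fun k => by
      simp only [Matrix.sum_apply, Matrix.smul_apply, vecMulVec_apply, smul_eq_mul, mul_assoc]
  calc ∑ k, (∑ i ∈ T, σ i • vecMulVec (u i) (v i)) j k ^ 2
      = ∑ i ∈ T, (σ i * u i j) ^ 2 := by simp only [hrow, hv.sum_sq_sum_mul]
    _ ≤ ∑ i ∈ T, M ^ 2 * σ i ^ 2 := Finset.sum_le_sum fun i hi => by
        rw [mul_pow, mul_comm]
        exact mul_le_mul_of_nonneg_right (sq_le_sq.2 ((hu i hi j).trans (le_abs_self M)))
          (sq_nonneg _)
    _ = (M * √(∑ i ∈ T, σ i ^ 2)) ^ 2 := by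
        rw [← Finset.mul_sum, mul_pow, Real.sq_sqrt (Finset.sum_nonneg fun _ _ => sq_nonneg _)]

theorem sqrt_sum_sq_le_sqrt_card_mul {ι : Type*} (T : Finset ι) {σ : ι → ℝ} {c : ℝ}
    (hσ : ∀ i ∈ T, 0 ≤ σ i ∧ σ i ≤ c) (hc : 0 ≤ c) :
    √(∑ i ∈ T, σ i ^ 2) ≤ √(T.card : ℝ) * c := by
  have hsum : ∑ i ∈ T, σ i ^ 2 ≤ T.card * c ^ 2 := by
    simpa using Finset.sum_le_card_nsmul T (fun i => σ i ^ 2) (c ^ 2) fun i hi =>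
      pow_le_pow_left₀ (hσ i hi).1 (hσ i hi).2 2
  calc √(∑ i ∈ T, σ i ^ 2) ≤ √(T.card * c ^ 2) := Real.sqrt_le_sqrt hsum
    _ = √(T.card : ℝ) * c := by rw [Real.sqrt_mul (Nat.cast_nonneg _), Real.sqrt_sq hc]

end CausalPanel

open CausalPanel in
theorem rowwise_tail_error_of_low_rank_approximation_general
    (n m r s : ℕ) (hs : s < r)
    (A : Matrix (Fin n) (Fin m) ℝ)
    (σv : Fin r → ℝ) (u : Fin r → Fin n → ℝ) (v : Fin r → Fin m → ℝ)
    (hmono : ∀ i j : Fin r, i ≤ j → σv j ≤ σv i)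
    (hnonneg : ∀ i, 0 ≤ σv i)
    (hv : OrthonormalFamily v)
    (hA : A = ∑ i, σv i • Matrix.vecMulVec (u i) (v i))
    (As : Matrix (Fin n) (Fin m) ℝ)
    (hAs : As = ∑ i ∈ Finset.univ.filter (fun i : Fin r => (i : ℕ) < s),
      σv i • Matrix.vecMulVec (u i) (v i)) :
    norm2Inf (As - A) ≤
        (⨆ i : {i : Fin r // s ≤ (i : ℕ)}, vecSup (u i)) *
          Real.sqrt (∑ i ∈ Finset.univ.filter (fun i : Fin r => s ≤ (i : ℕ)), σv i ^ 2) ∧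
      (⨆ i : {i : Fin r // s ≤ (i : ℕ)}, vecSup (u i)) *
          Real.sqrt (∑ i ∈ Finset.univ.filter (fun i : Fin r => s ≤ (i : ℕ)), σv i ^ 2) ≤
        Real.sqrt r * σv ⟨s, hs⟩ * (⨆ i : {i : Fin r // s ≤ (i : ℕ)}, vecSup (u i)) := by
  set T := Finset.univ.filter (fun i : Fin r => s ≤ (i : ℕ))
  set M := ⨆ i : {i : Fin r // s ≤ (i : ℕ)}, vecSup (u i)
  have hM : 0 ≤ M := Real.iSup_nonneg fun i => vecSup_nonneg _
  have huM : ∀ i ∈ T, ∀ j, |u i j| ≤ M := fun i hi j =>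
    (abs_le_vecSup _ j).trans <| le_ciSup (f := fun i : {i : Fin r // s ≤ (i : ℕ)} => vecSup (u i))
      (Set.finite_range _).bddAbove ⟨i, (Finset.mem_filter.1 hi).2⟩
  have htail : As - A = -∑ i ∈ T, σv i • vecMulVec (u i) (v i) := by
    rw [hA, hAs, ← Finset.sum_filter_add_sum_filter_not Finset.univ (fun i : Fin r => (i : ℕ) < s)]
    simp only [not_lt, T, sub_add_cancel_left]
  refine ⟨?_, ?_⟩
  · rw [htail, norm2Inf_neg]
    exact norm2Inf_sum_smul_vecMulVec_le hv T σv hM huM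
  · have hσ : ∀ i ∈ T, 0 ≤ σv i ∧ σv i ≤ σv ⟨s, hs⟩ := fun i hi =>
      ⟨hnonneg i, hmono _ i (Finset.mem_filter.1 hi).2⟩
    have hcard : √(T.card : ℝ) ≤ √(r : ℝ) :=
      Real.sqrt_le_sqrt (by exact_mod_cast (Finset.card_le_univ T).trans_eq (Fintype.card_fin r))
    calc M * √(∑ i ∈ T, σv i ^ 2)
        ≤ M * (√(r : ℝ) * σv ⟨s, hs⟩) := mul_le_mul_of_nonneg_left
          ((sqrt_sum_sq_le_sqrt_card_mul T hσ (hnonneg _)).trans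
            (mul_le_mul_of_nonneg_right hcard (hnonneg _))) hM
      _ = √(r : ℝ) * σv ⟨s, hs⟩ * M := by ring

open CausalPanel in
/-- Row-wise tail error of low-rank approximation.
`σv i`, `u i`, `v i` are the `(i+1)`-st singular value/vectors (0-indexed `i : Fin r`),
so `σ_{s+1} = σv ⟨s, _⟩` and the tail indices `s < i ≤ r` are `{i : Fin r | s ≤ i.val}`. -/
theorem rowwise_tail_error_of_low_rank_approximation
    (n m r s : ℕ) (hs : s < r)
    (A : Matrix (Fin n) (Fin m) ℝ)
    (σv : Fin r → ℝ) (u : Fin r → Fin n → ℝ) (v : Fin r → Fin m → ℝ)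
    (hmono : ∀ i j : Fin r, i ≤ j → σv j ≤ σv i)
    (hnonneg : ∀ i, 0 ≤ σv i)
    (hu : OrthonormalFamily u) (hv : OrthonormalFamily v)
    (hA : A = ∑ i, σv i • Matrix.vecMulVec (u i) (v i))
    (As : Matrix (Fin n) (Fin m) ℝ)
    (hAs : As = ∑ i ∈ Finset.univ.filter (fun i : Fin r => (i : ℕ) < s),
      σv i • Matrix.vecMulVec (u i) (v i)) :
    norm2Inf (As - A) ≤
        (⨆ i : {i : Fin r // s ≤ (i : ℕ)}, vecSup (u i)) *
          Real.sqrt (∑ i ∈ Finset.univ.filter (fun i : Fin r => s ≤ (i : ℕ)), σv i ^ 2) ∧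
      (⨆ i : {i : Fin r // s ≤ (i : ℕ)}, vecSup (u i)) *
          Real.sqrt (∑ i ∈ Finset.univ.filter (fun i : Fin r => s ≤ (i : ℕ)), σv i ^ 2) ≤
        Real.sqrt r * σv ⟨s, hs⟩ * (⨆ i : {i : Fin r // s ≤ (i : ℕ)}, vecSup (u i)) :=
  rowwise_tail_error_of_low_rank_approximation_general n m r s hs A σv u v hmono hnonneg hv hA As
    hAs
end
end

section
/- Existence of a detectable singular gap: let A ∈ ℝ^{n×m} have rank at most r and let t > 0 satisfy σ_1(A) > 10·r·t. Let Ã ∈ ℝ^{n×m} satisfy ‖Ã − A‖_op ≤ t. Then there exists an index s with 1 ≤ s ≤ r such that σ_s(Ã) − σ_{s+1}(Ã) ≥ 8t, where σ_k(·) denotes the k-th largest singular value. -/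
open MeasureTheory ProbabilityTheory Matrix
open scoped BigOperators ENNReal

noncomputable section

/-!
By Weyl's inequality, a perturbation of operator norm at most `t` moves every singular value by at
most `t`. Hence `σ₁(Ã) ≥ σ₁(A) - t > 10rt - t`, while `σ_{r+1}(Ã) ≤ σ_{r+1}(A) + t = t` because
`A` has rank at most `r`. The drop `σ₁(Ã) - σ_{r+1}(Ã) > 8rt` telescopes into `r` consecutive
gaps, so one of them exceeds `8t`.
-/

theorem exists_lt_sub_succ_of_mul_lt_sub (f : ℕ → ℝ) (c : ℝ) (r : ℕ)
    (h : r * c < f 1 - f (r + 1)) : ∃ s, 1 ≤ s ∧ s ≤ r ∧ c < f s - f (s + 1) := by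
  have htelescope : ∑ i ∈ Finset.range r, (f (i + 1) - f (i + 2)) = f 1 - f (r + 1) :=
    Finset.sum_range_sub' (fun i => f (i + 1)) r
  have hsum : ∑ _i ∈ Finset.range r, c < ∑ i ∈ Finset.range r, (f (i + 1) - f (i + 2)) := by
    rwa [htelescope, Finset.sum_const, Finset.card_range, nsmul_eq_mul]
  obtain ⟨i, hi, hgap⟩ := Finset.exists_lt_of_sum_lt hsum
  exact ⟨i + 1, by omega, Finset.mem_range.1 hi, hgap⟩

namespace CausalPanel

open Module

variable {α β : Type*} [Fintype α] [Fintype β] [DecidableEq β]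

def svalSet (A : Matrix α β ℝ) (k : ℕ) : Set ℝ :=
  {t : ℝ | 0 ≤ t ∧ ∃ V : Submodule ℝ (EuclideanSpace ℝ β),
    finrank ℝ V = k ∧ ∀ x ∈ V, t * ‖x‖ ≤ ‖Matrix.toEuclideanLin A x‖}

theorem sval_eq_sSup_svalSet (A : Matrix α β ℝ) (k : ℕ) : sval A k = sSup (svalSet A k) := rfl

theorem opNorm_nonneg (A : Matrix α β ℝ) : 0 ≤ opNorm A := norm_nonneg _

theorem opNorm_sub_comm (A B : Matrix α β ℝ) : opNorm (A - B) = opNorm (B - A) := by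
  rw [opNorm, opNorm, ← neg_sub B A, map_neg, map_neg, norm_neg]

theorem norm_toEuclideanLin_le (A : Matrix α β ℝ) (x : EuclideanSpace ℝ β) :
    ‖Matrix.toEuclideanLin A x‖ ≤ opNorm A * ‖x‖ :=
  (LinearMap.toContinuousLinearMap (Matrix.toEuclideanLin A)).le_opNorm x

theorem norm_toEuclideanLin_le_add (A B : Matrix α β ℝ) (x : EuclideanSpace ℝ β) :
    ‖Matrix.toEuclideanLin A x‖ ≤ ‖Matrix.toEuclideanLin B x‖ + opNorm (B - A) * ‖x‖ :=
  calc ‖Matrix.toEuclideanLin A x‖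
      ≤ ‖Matrix.toEuclideanLin B x‖ + ‖Matrix.toEuclideanLin A x - Matrix.toEuclideanLin B x‖ :=
        norm_le_norm_add_norm_sub' _ _
    _ = ‖Matrix.toEuclideanLin B x‖ + ‖Matrix.toEuclideanLin (B - A) x‖ := by
        rw [norm_sub_rev, ← LinearMap.sub_apply, ← map_sub]
    _ ≤ ‖Matrix.toEuclideanLin B x‖ + opNorm (B - A) * ‖x‖ :=
        add_le_add_right (norm_toEuclideanLin_le _ x) _

theorem le_opNorm_of_mem_svalSet {A : Matrix α β ℝ} {k : ℕ} (hk : k ≠ 0) {s : ℝ}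
    (hs : s ∈ svalSet A k) : s ≤ opNorm A := by
  obtain ⟨-, V, hV, hlower⟩ := hs
  have hVne : V ≠ ⊥ := by
    rintro rfl
    rw [finrank_bot] at hV
    exact hk hV.symm
  obtain ⟨x, hxV, hx0⟩ := Submodule.exists_mem_ne_zero_of_ne_bot hVne
  have hx : 0 < ‖x‖ := norm_pos_iff.2 hx0
  exact le_of_mul_le_mul_right ((hlower x hxV).trans (norm_toEuclideanLin_le A x)) hx

theorem bddAbove_svalSet (A : Matrix α β ℝ) {k : ℕ} (hk : k ≠ 0) : BddAbove (svalSet A k) :=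
  ⟨opNorm A, fun _ hs => le_opNorm_of_mem_svalSet hk hs⟩

theorem sval_nonneg (A : Matrix α β ℝ) (k : ℕ) : 0 ≤ sval A k :=
  Real.sSup_nonneg fun _ hs => hs.1

theorem sub_opNorm_mem_svalSet {A : Matrix α β ℝ} {k : ℕ} {s : ℝ} (hs : s ∈ svalSet A k)
    (B : Matrix α β ℝ) (hsB : opNorm (B - A) ≤ s) : s - opNorm (B - A) ∈ svalSet B k := by
  obtain ⟨-, V, hV, hlower⟩ := hs
  refine ⟨sub_nonneg.2 hsB, V, hV, fun x hx => ?_⟩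
  have := norm_toEuclideanLin_le_add A B x
  nlinarith [hlower x hx]

theorem sval_le_sval_add_opNorm (A B : Matrix α β ℝ) {k : ℕ} (hk : k ≠ 0) :
    sval A k ≤ sval B k + opNorm (B - A) := by
  rcases (svalSet A k).eq_empty_or_nonempty with hempty | hne
  · rw [sval_eq_sSup_svalSet, hempty, Real.sSup_empty]
    exact add_nonneg (sval_nonneg B k) (opNorm_nonneg _)
  refine csSup_le hne fun s hs => ?_
  rcases le_total s (opNorm (B - A)) with hsB | hsB
  · linarith [sval_nonneg B k]
  · linarith [sval_eq_sSup_svalSet B k,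
      le_csSup (bddAbove_svalSet B hk) (sub_opNorm_mem_svalSet hs B hsB)]

theorem finrank_le_rank_of_mem_svalSet {A : Matrix α β ℝ} {k : ℕ} {s : ℝ}
    (hs : s ∈ svalSet A k) (hpos : 0 < s) : k ≤ A.rank := by
  obtain ⟨-, V, rfl, hlower⟩ := hs
  have hrank : A.rank = finrank ℝ (LinearMap.range (Matrix.toEuclideanLin A)) := by
    rw [Matrix.toEuclideanLin_eq_toLin_orthonormal]
    exact Matrix.rank_eq_finrank_range_toLin A _ _
  set L := Matrix.toEuclideanLin A
  have hinj : Function.Injective (L.domRestrict V) := by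
    rw [← LinearMap.ker_eq_bot, LinearMap.ker_eq_bot']
    rintro ⟨x, hxV⟩ hx
    have hLx : L x = 0 := hx
    have hle := hlower x hxV
    rw [hLx, norm_zero] at hle
    exact Subtype.ext (norm_le_zero_iff.1 (nonpos_of_mul_nonpos_right hle hpos))
  rw [hrank, ← LinearMap.finrank_range_of_inj hinj]
  exact Submodule.finrank_mono (LinearMap.range_domRestrict_le_range L V)

theorem sval_eq_zero_of_rank_lt {A : Matrix α β ℝ} {k : ℕ} (hk : A.rank < k) : sval A k = 0 := by
  refine le_antisymm (Real.sSup_nonpos fun s hs => ?_) (sval_nonneg A k)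
  by_contra! hpos
  exact hk.not_ge (finrank_le_rank_of_mem_svalSet hs hpos)

end CausalPanel

open CausalPanel in
theorem exists_detectable_singular_gap_general
    (n m r : ℕ) (t : ℝ)
    (A At : Matrix (Fin n) (Fin m) ℝ)
    (hrank : A.rank ≤ r)
    (hσ1 : 10 * r * t < sval A 1)
    (hpert : opNorm (At - A) ≤ t) :
    ∃ s : ℕ, 1 ≤ s ∧ s ≤ r ∧ 8 * t ≤ sval At s - sval At (s + 1) := by
  have ht : 0 ≤ t := (opNorm_nonneg _).trans hpert
  have hr : 1 ≤ r := by
    by_contra! hr0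
    obtain rfl : r = 0 := by omega
    rw [sval_eq_zero_of_rank_lt (by omega)] at hσ1
    simp at hσ1
  have htop : sval A 1 ≤ sval At 1 + t :=
    (sval_le_sval_add_opNorm A At one_ne_zero).trans (by linarith)
  have hbottom : sval At (r + 1) ≤ t := by
    have hweyl := sval_le_sval_add_opNorm At A r.add_one_ne_zero
    rw [sval_eq_zero_of_rank_lt (A := A) (by omega), zero_add, opNorm_sub_comm] at hweyl
    exact hweyl.trans hpert
  have hr' : (1 : ℝ) ≤ r := by exact_mod_cast hr
  obtain ⟨s, hs1, hsr, hgap⟩ :=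
    exists_lt_sub_succ_of_mul_lt_sub (sval At) (8 * t) r (by nlinarith)
  exact ⟨s, hs1, hsr, hgap.le⟩

open CausalPanel in
/-- Existence of a detectable singular gap. -/
theorem exists_detectable_singular_gap
    (n m r : ℕ) (t : ℝ) (ht : 0 < t)
    (A At : Matrix (Fin n) (Fin m) ℝ)
    (hrank : A.rank ≤ r)
    (hσ1 : 10 * r * t < sval A 1)
    (hpert : opNorm (At - A) ≤ t) :
    ∃ s : ℕ, 1 ≤ s ∧ s ≤ r ∧ 8 * t ≤ sval At s - sval At (s + 1) :=
  exists_detectable_singular_gap_general n m r t A At hrank hσ1 hpert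
end
end
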